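/- arXiv:2411.17113 — 8 statements merged into one kernel-verified Lean document; each statement's English description precedes it below -/
import Mathlib

section
/- Let K ≥ 2 and let Ξ = { z ∈ ℝ^K : Σ_{j=1}^K z_j = K−1, 0 ≤ z_1 ≤ ... ≤ z_K ≤ 1 }. For each j ∈ [K], let z_j^* ∈ ℝ^K be the vector whose first j coordinates equal 1 − 1/j and whose remaining K−j coordinates equal 1. Then each z_j^* is an extreme point of the convex set Ξ. -/
/-!
For `z ∈ Ξ`, monotonicity and `z ≤ 1` put `z` below the vector equal to `z j` on the
coordinates `i ≤ j` and to `1` after them. Comparing sums gives `(j + 1) * z j ≥ j`, and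
equality forces `z` to be that vector. So the functional `z ↦ -z j` is maximised over `Ξ`
exactly at `z*_j`, which is therefore an exposed, hence extreme, point.
-/

open Finset

def Xi (K : ℕ) : Set (Fin K → ℝ) :=
  {z | (∑ i, z i) = K - 1 ∧ Monotone z ∧ ∀ i, 0 ≤ z i ∧ z i ≤ 1}

section

variable {K : ℕ}

def stepVec (j : Fin K) (t : ℝ) : Fin K → ℝ := fun i => if (i : ℕ) ≤ (j : ℕ) then t else 1

lemma sum_stepVec (j : Fin K) (t : ℝ) :
    ∑ i, stepVec j t i = ((j : ℕ) + 1) * t + (K - ((j : ℕ) + 1)) := by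
  have hIic : ({i | (i : ℕ) ≤ (j : ℕ)} : Finset (Fin K)) = Iic j := by
    ext i; simp only [mem_filter, mem_univ, true_and, mem_Iic, Fin.le_iff_val_le_val]
  have hcard : (#(Iic j)ᶜ : ℝ) = K - ((j : ℕ) + 1) := by
    rw [card_compl, Fin.card_Iic, Fintype.card_fin, Nat.cast_sub j.2]; push_cast; ring
  simp only [stepVec, sum_ite, hIic, filter_not, ← compl_eq_univ_sdiff, sum_const, Fin.card_Iic,
    nsmul_eq_mul, mul_one, hcard]
  push_cast; ring

lemma stepVec_apply_self (j : Fin K) (t : ℝ) : stepVec j t j = t := if_pos le_rfl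

lemma stepVec_monotone (j : Fin K) {t : ℝ} (ht : t ≤ 1) : Monotone (stepVec j t) := by
  intro a b hab
  have : (a : ℕ) ≤ b := hab
  unfold stepVec
  split_ifs <;> first | rfl | exact ht | omega

lemma stepVec_mem_Xi (j : Fin K) : stepVec j (1 - 1 / ((j : ℕ) + 1 : ℝ)) ∈ Xi K := by
  have hinv : 0 ≤ 1 / ((j : ℕ) + 1 : ℝ) := by positivity
  have hinv_le : 1 / ((j : ℕ) + 1 : ℝ) ≤ 1 := by
    rw [div_le_one (by positivity)]; linarith [(j : ℕ).cast_nonneg (α := ℝ)]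
  refine ⟨?_, stepVec_monotone j (by linarith), fun i => ?_⟩
  · rw [sum_stepVec]; field_simp; ring
  · unfold stepVec
    split_ifs <;> constructor <;> linarith

lemma le_stepVec_of_mem_Xi {z : Fin K → ℝ} (hz : z ∈ Xi K) (j : Fin K) : z ≤ stepVec j (z j) := by
  intro i
  unfold stepVec
  split_ifs with hij
  · exact hz.2.1 (Fin.le_def.mpr hij)
  · exact (hz.2.2 i).2

lemma le_apply_of_mem_Xi {z : Fin K → ℝ} (hz : z ∈ Xi K) (j : Fin K) :
    1 - 1 / ((j : ℕ) + 1 : ℝ) ≤ z j := by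
  have hsum : (K : ℝ) - 1 ≤ ((j : ℕ) + 1) * z j + (K - ((j : ℕ) + 1)) := by
    rw [← hz.1, ← sum_stepVec]
    exact sum_le_sum fun i _ => le_stepVec_of_mem_Xi hz j i
  rw [one_sub_div (by positivity), div_le_iff₀ (by positivity)]
  linarith

lemma eq_stepVec_of_mem_Xi {z : Fin K → ℝ} (hz : z ∈ Xi K) (j : Fin K)
    (hzj : z j = 1 - 1 / ((j : ℕ) + 1 : ℝ)) : z = stepVec j (1 - 1 / ((j : ℕ) + 1 : ℝ)) := by
  have hle := le_stepVec_of_mem_Xi hz j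
  rw [hzj] at hle
  have hsum : ∑ i, z i = ∑ i, stepVec j (1 - 1 / ((j : ℕ) + 1 : ℝ)) i := by
    rw [hz.1, sum_stepVec]; field_simp; ring
  funext i
  exact (sum_eq_sum_iff_of_le fun i _ => hle i).1 hsum i (mem_univ i)

lemma stepVec_mem_exposedPoints_Xi (j : Fin K) :
    stepVec j (1 - 1 / ((j : ℕ) + 1 : ℝ)) ∈ (Xi K).exposedPoints ℝ := by
  let l : StrongDual ℝ (Fin K → ℝ) := -ContinuousLinearMap.proj j
  have hl : ∀ w, l w = -w j := fun _ => rfl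
  refine ⟨stepVec_mem_Xi j, l, fun z hz => ?_⟩
  simp only [hl, stepVec_apply_self, neg_le_neg_iff]
  exact ⟨le_apply_of_mem_Xi hz j,
    fun hzj => eq_stepVec_of_mem_Xi hz j (le_antisymm hzj (le_apply_of_mem_Xi hz j))⟩

end

theorem zstar_extreme_point_general (K : ℕ) (j : Fin K) :
    (fun i : Fin K => if (i : ℕ) ≤ (j : ℕ) then 1 - 1 / ((j : ℕ) + 1 : ℝ) else 1) ∈
      Set.extremePoints ℝ
        {z : Fin K → ℝ | (∑ i, z i) = K - 1 ∧ Monotone z ∧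
          (∀ i, 0 ≤ z i ∧ z i ≤ 1)} :=
  exposedPoints_subset_extremePoints (stepVec_mem_exposedPoints_Xi j)

theorem zstar_extreme_point (K : ℕ) (hK : 2 ≤ K) (j : Fin K) :
    (fun i : Fin K => if (i : ℕ) ≤ (j : ℕ) then 1 - 1 / ((j : ℕ) + 1 : ℝ) else 1) ∈
      Set.extremePoints ℝ
        {z : Fin K → ℝ | (∑ i, z i) = K - 1 ∧ Monotone z ∧
          (∀ i, 0 ≤ z i ∧ z i ≤ 1)} :=
  zstar_extreme_point_general K j
end

section
/- Let K ≥ 2 and Ξ = { z ∈ ℝ^K : Σ_{j=1}^K z_j = K−1, 0 ≤ z_1 ≤ ... ≤ z_K ≤ 1 }. If z ∈ Ξ is an extreme point of Ξ, then z = z_j^* for some j ∈ [K], where z_j^* has first j coordinates equal to 1 − 1/j and remaining coordinates equal to 1. -/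
/-!
For `z ∈ Ξ` the weights `1 - z i` sum to one; let `c` be the mean of `z` for these weights. The
direction `d i = (1 - z i) * (z i - c)` has `∑ i, d i = 0`, vanishes where `z i = 1`, and is small
where `z i` is small (`c ≤ 2 * z i`), while `x ↦ x + t * (1 - x) * (x - c)` is increasing on
`[0, 1]` for `|t| ≤ 1/3`. Hence `z ± d / 3 ∈ Ξ`, so at an extreme point `d = 0`: every coordinate
below `1` equals `c`. A monotone such `z` is `(c, …, c, 1, …, 1)`, and if `c` occurs `j` times the
sum constraint reads `j * (1 - c) = 1`.
-/

open Finset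

lemma eq_zero_of_add_mem_of_sub_mem_of_mem_extremePoints {𝕜 E : Type*} [Ring 𝕜] [LinearOrder 𝕜]
    [IsStrictOrderedRing 𝕜] [Invertible (2 : 𝕜)] [AddCommGroup E] [Module 𝕜 E]
    {A : Set E} {z d : E} (hz : z ∈ A.extremePoints 𝕜) (hadd : z + d ∈ A) (hsub : z - d ∈ A) :
    d = 0 :=
  add_eq_left.mp (hz.2 hadd hsub (mem_openSegment_add_sub z d))

section Tilt

def tilt (t c x : ℝ) : ℝ := x + t * ((1 - x) * (x - c))

variable {t c x y : ℝ}

lemma tilt_le_tilt (ht : |t| ≤ 1 / 3) (hc₀ : 0 ≤ c) (hc₁ : c ≤ 1) (hx : 0 ≤ x) (hxy : x ≤ y)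
    (hy : y ≤ 1) : tilt t c x ≤ tilt t c y := by
  obtain ⟨ht₁, ht₂⟩ := abs_le.mp ht
  -- `tilt t c y - tilt t c x = (y - x) * (1 + t * (1 + c - x - y))`
  have hslope : 0 ≤ 1 + t * (1 + c - x - y) := by nlinarith
  unfold tilt
  nlinarith [mul_nonneg (sub_nonneg.mpr hxy) hslope]

lemma tilt_le_one (ht : |t| ≤ 1 / 3) (hc₀ : 0 ≤ c) (hc₁ : c ≤ 1) (hx₀ : 0 ≤ x) (hx₁ : x ≤ 1) :
    tilt t c x ≤ 1 := by
  obtain ⟨ht₁, ht₂⟩ := abs_le.mp ht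
  have hfactor : 0 ≤ 1 - t * (x - c) := by nlinarith
  unfold tilt
  nlinarith [mul_nonneg (sub_nonneg.mpr hx₁) hfactor]

lemma tilt_nonneg (ht : |t| ≤ 1 / 3) (hc₀ : 0 ≤ c) (hc : c ≤ 2 * x) (hx₁ : x ≤ 1) :
    0 ≤ tilt t c x := by
  obtain ⟨ht₁, ht₂⟩ := abs_le.mp ht
  have hdist : |(1 - x) * (x - c)| ≤ x := by
    rw [abs_mul, abs_of_nonneg (by linarith : 0 ≤ 1 - x)]
    have : |x - c| ≤ x := abs_le.mpr ⟨by linarith, by linarith⟩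
    nlinarith [abs_nonneg (x - c)]
  unfold tilt
  nlinarith [abs_le.mp hdist, abs_nonneg ((1 - x) * (x - c))]

end Tilt

/-- The set `Ξ`, with `∑ i, z i = K - 1` written as `∑ i, (1 - z i) = 1`. -/
def sortedCappedSimplex (ι : Type*) [Fintype ι] [Preorder ι] : Set (ι → ℝ) :=
  {z | ∑ i, (1 - z i) = 1 ∧ Monotone z ∧ ∀ i, z i ∈ Set.Icc 0 1}

section DeficitMean

variable {ι : Type*} [Fintype ι] {z : ι → ℝ}

def deficitMean (z : ι → ℝ) : ℝ := ∑ i, (1 - z i) * z i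

def tiltDirection (z : ι → ℝ) : ι → ℝ := fun i => (1 - z i) * (z i - deficitMean z)

lemma deficitMean_nonneg (hz : ∀ i, z i ∈ Set.Icc 0 1) : 0 ≤ deficitMean z :=
  sum_nonneg fun i _ => mul_nonneg (sub_nonneg.mpr (hz i).2) (hz i).1

lemma deficitMean_le_one (hsum : ∑ i, (1 - z i) = 1) (hz : ∀ i, z i ∈ Set.Icc 0 1) :
    deficitMean z ≤ 1 :=
  hsum ▸ sum_le_sum fun i _ => mul_le_of_le_one_right (sub_nonneg.mpr (hz i).2) (hz i).2

lemma deficitMean_le_two_mul (hsum : ∑ i, (1 - z i) = 1) (hz : ∀ i, z i ∈ Set.Icc 0 1) (k : ι) :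
    deficitMean z ≤ 2 * z k := by
  classical
  have hrest : ∑ i ∈ univ.erase k, (1 - z i) = z k := by
    rw [← add_sum_erase _ _ (mem_univ k)] at hsum
    linarith
  have hle : ∑ i ∈ univ.erase k, (1 - z i) * z i ≤ z k :=
    hrest ▸ sum_le_sum fun i _ => mul_le_of_le_one_right (sub_nonneg.mpr (hz i).2) (hz i).2
  rw [deficitMean, ← add_sum_erase _ _ (mem_univ k)]
  nlinarith [(hz k).1, (hz k).2]

lemma sum_tiltDirection (hsum : ∑ i, (1 - z i) = 1) : ∑ i, tiltDirection z i = 0 := by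
  simp only [tiltDirection, mul_sub, sum_sub_distrib, ← sum_mul, hsum, deficitMean, one_mul,
    sub_self]

end DeficitMean

section SortedCappedSimplex

variable {ι : Type*} [Fintype ι] [Preorder ι] {z : ι → ℝ}

lemma add_smul_tiltDirection_mem {t : ℝ} (hz : z ∈ sortedCappedSimplex ι) (ht : |t| ≤ 1 / 3) :
    z + t • tiltDirection z ∈ sortedCappedSimplex ι := by
  obtain ⟨hsum, hmono, hbound⟩ := hz
  have hc₀ := deficitMean_nonneg hbound
  have hc₁ := deficitMean_le_one hsum hbound
  refine ⟨?_, fun i j hij => ?_, fun i => ⟨?_, ?_⟩⟩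
  · simp only [Pi.add_apply, Pi.smul_apply, smul_eq_mul, sub_add_eq_sub_sub, sum_sub_distrib,
      ← mul_sum, sum_tiltDirection hsum] at hsum ⊢
    linarith
  · exact tilt_le_tilt ht hc₀ hc₁ (hbound i).1 (hmono hij) (hbound j).2
  · exact tilt_nonneg ht hc₀ (deficitMean_le_two_mul hsum hbound i) (hbound i).2
  · exact tilt_le_one ht hc₀ hc₁ (hbound i).1 (hbound i).2

theorem eq_deficitMean_of_mem_extremePoints (hz : z ∈ (sortedCappedSimplex ι).extremePoints ℝ)
    {i : ι} (hi : z i < 1) : z i = deficitMean z := by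
  have hmem (t : ℝ) (ht : |t| ≤ 1 / 3) : z + t • tiltDirection z ∈ sortedCappedSimplex ι :=
    add_smul_tiltDirection_mem hz.1 ht
  have hzero : (1 / 3 : ℝ) • tiltDirection z = 0 :=
    eq_zero_of_add_mem_of_sub_mem_of_mem_extremePoints hz (hmem _ (by norm_num [abs_of_pos]))
      (by simpa [sub_eq_add_neg, ← neg_smul] using hmem (-(1 / 3)) (by norm_num [abs_of_pos]))
  have hcoord := congrFun hzero i
  simp only [tiltDirection, Pi.smul_apply, smul_eq_mul, Pi.zero_apply, mul_eq_zero] at hcoord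
  rcases hcoord with h | h | h
  · norm_num at h
  · linarith
  · linarith

end SortedCappedSimplex

lemma exists_eq_step_of_lt_one_imp_eq {K : ℕ} {z : Fin K → ℝ} {c : ℝ}
    (hsum : ∑ i, (1 - z i) = 1) (hmono : Monotone z) (hle : ∀ i, z i ≤ 1)
    (hc : ∀ i, z i < 1 → z i = c) :
    ∃ j : Fin K, z = fun i : Fin K => if (i : ℕ) ≤ (j : ℕ) then 1 - 1 / ((j : ℕ) + 1 : ℝ) else 1 := by
  set S := univ.filter fun i => z i < 1
  have hS : S.Nonempty := by
    obtain ⟨i, hi⟩ : ∃ i, z i < 1 := by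
      by_contra! h
      linarith [sum_nonpos fun i (_ : i ∈ univ) => sub_nonpos.mpr (h i)]
    exact ⟨i, by simp [S, hi]⟩
  set j := S.max' hS
  have hstep : z = fun i : Fin K => if (i : ℕ) ≤ (j : ℕ) then c else 1 := by
    funext i
    split_ifs with h
    · exact hc i ((hmono (Fin.le_def.mpr h)).trans_lt (mem_filter.mp (S.max'_mem hS)).2)
    · exact le_antisymm (hle i)
        (not_lt.mp fun hi => h (Fin.le_def.mp (S.le_max' i (by simp [S, hi]))))
  have hcount : ((j : ℕ) + 1 : ℝ) * (1 - c) = 1 := by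
    rw [hstep] at hsum
    have hterm (i : Fin K) : (1 - if (i : ℕ) ≤ (j : ℕ) then c else 1) =
        if i ∈ (Iic j : Finset (Fin K)) then 1 - c else 0 := by
      simp only [mem_Iic, Fin.le_def]
      split_ifs <;> ring
    rwa [sum_congr rfl fun i _ => hterm i, sum_ite_mem, univ_inter, sum_const, Fin.card_Iic,
      nsmul_eq_mul, Nat.cast_succ] at hsum
  refine ⟨j, hstep.trans ?_⟩
  have : ((j : ℕ) + 1 : ℝ) ≠ 0 := by positivity
  funext i
  congr 1
  field_simp
  linarith

theorem extreme_point_eq_zstar_general (K : ℕ) (z : Fin K → ℝ)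
    (hz : z ∈ Set.extremePoints ℝ
        {z : Fin K → ℝ | (∑ i, z i) = K - 1 ∧ Monotone z ∧
          (∀ i, 0 ≤ z i ∧ z i ≤ 1)}) :
    ∃ j : Fin K,
      z = fun i : Fin K => if (i : ℕ) ≤ (j : ℕ) then 1 - 1 / ((j : ℕ) + 1 : ℝ) else 1 := by
  have hΞ : {z : Fin K → ℝ | (∑ i, z i) = K - 1 ∧ Monotone z ∧ (∀ i, 0 ≤ z i ∧ z i ≤ 1)} =
      sortedCappedSimplex (Fin K) := by
    ext w
    have hdeficit : ∑ i, (1 - w i) = 1 ↔ ∑ i, w i = K - 1 := by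
      rw [sum_sub_distrib, sum_const, card_univ, Fintype.card_fin, nsmul_one]
      constructor <;> intro <;> linarith
    simp only [sortedCappedSimplex, Set.mem_ofPred_eq, Set.mem_Icc, hdeficit]
  rw [hΞ] at hz
  exact exists_eq_step_of_lt_one_imp_eq hz.1.1 hz.1.2.1 (fun i => (hz.1.2.2 i).2)
    fun i => eq_deficitMean_of_mem_extremePoints hz

theorem extreme_point_eq_zstar (K : ℕ) (hK : 2 ≤ K) (z : Fin K → ℝ)
    (hz : z ∈ Set.extremePoints ℝ
        {z : Fin K → ℝ | (∑ i, z i) = K - 1 ∧ Monotone z ∧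
          (∀ i, 0 ≤ z i ∧ z i ≤ 1)}) :
    ∃ j : Fin K,
      z = fun i : Fin K => if (i : ℕ) ≤ (j : ℕ) then 1 - 1 / ((j : ℕ) + 1 : ℝ) else 1 :=
  extreme_point_eq_zstar_general K z hz
end

section
/- Let T : [0,1] → ℝ be decreasing, P_0, P_1 ≥ 0 with P_0 + P_1 = 1, and ε, κ > 0, ρ = ε^p/κ^p for some p ≥ 1. For ψ ∈ [0,1/2] define g(γ;ψ) = γε^p + P_0·max{T(1−ψ), T(ψ)−γκ^p} + P_1·max{T(1−ψ)−γκ^p, T(ψ)}. If P_0 < ρ, then inf over ψ ∈ [0,1/2] and γ ≥ 0 of g(γ;ψ) equals T(1/2), attained at ψ = 1/2 and γ = 0. -/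
theorem binary_robust_risk_low_P0 (T : ℝ → ℝ)
    (hT : AntitoneOn T (Set.Icc 0 1))
    (hTa : BddAbove (T '' Set.Icc 0 1)) (hTb : BddBelow (T '' Set.Icc 0 1))
    (P₀ P₁ ε κ p : ℝ) (hP₀ : 0 ≤ P₀) (hP₁ : 0 ≤ P₁) (hsum : P₀ + P₁ = 1)
    (hε : 0 < ε) (hκ : 0 < κ) (hp : 1 ≤ p)
    (hlow : P₀ < ε ^ p / κ ^ p) :
    (∀ ψ ∈ Set.Icc (0 : ℝ) (1 / 2), ∀ γ : ℝ, 0 ≤ γ →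
      T (1 / 2) ≤ γ * ε ^ p + P₀ * max (T (1 - ψ)) (T ψ - γ * κ ^ p)
        + P₁ * max (T (1 - ψ) - γ * κ ^ p) (T ψ)) ∧
    0 * ε ^ p + P₀ * max (T (1 - 1 / 2)) (T (1 / 2) - 0 * κ ^ p)
        + P₁ * max (T (1 - 1 / 2) - 0 * κ ^ p) (T (1 / 2)) = T (1 / 2) := by
  have hκp : (0:ℝ) < κ ^ p := Real.rpow_pos_of_pos hκ p
  have hcoef : 0 < ε ^ p - P₀ * κ ^ p := by
    have := (lt_div_iff₀ hκp).mp hlow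
    linarith
  constructor
  · intro ψ hψ γ hγ
    obtain ⟨hψ0, hψ1⟩ := hψ
    have hTb : T (1/2) ≤ T ψ :=
      hT ⟨hψ0, by linarith⟩ (by norm_num) hψ1
    have h1 : T ψ - γ * κ ^ p ≤ max (T (1 - ψ)) (T ψ - γ * κ ^ p) := le_max_right _ _
    have h2 : T ψ ≤ max (T (1 - ψ) - γ * κ ^ p) (T ψ) := le_max_right _ _
    have hm1 := mul_le_mul_of_nonneg_left h1 hP₀
    have hm2 := mul_le_mul_of_nonneg_left h2 hP₁
    have hts : P₀ * T ψ + P₁ * T ψ = T ψ := by rw [← add_mul, hsum, one_mul]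
    nlinarith [mul_nonneg hγ hcoef.le]
  · norm_num
    rw [← add_mul, hsum, one_mul]
end

section
/- Let T : [0,1] → ℝ be bounded, decreasing, twice differentiable and concave, let P_0 ∈ [0,1], P_1 = 1 − P_0, and ρ ≥ 0. Define, for ψ ∈ [0,1/2], R(ψ) = (P_1 + ρ)·T(ψ) + (P_0 − ρ)·T(1−ψ), and assume P_0 ≥ ρ. Then the minimum of R over [0,1/2] is attained at ψ = 1/2 if P_0 ≤ ρ + (T(0)−T(1/2))/(T(0)−T(1)), and at ψ = 0 if P_0 ≥ ρ + (T(0)−T(1/2))/(T(0)−T(1)). -/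
theorem binary_concave_optimal_action (T : ℝ → ℝ)
    (hT2 : ContDiffOn ℝ 2 T (Set.Icc 0 1))
    (hanti : StrictAntiOn T (Set.Icc 0 1))
    (hconc : ConcaveOn ℝ (Set.Icc 0 1) T)
    (hTa : BddAbove (T '' Set.Icc 0 1)) (hTb : BddBelow (T '' Set.Icc 0 1))
    (P₀ ρ : ℝ) (hP₀ : P₀ ∈ Set.Icc (0 : ℝ) 1) (hρ : 0 ≤ ρ) (hge : ρ ≤ P₀) :
    (P₀ ≤ ρ + (T 0 - T (1 / 2)) / (T 0 - T 1) →
      ∀ ψ ∈ Set.Icc (0 : ℝ) (1 / 2),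
        ((1 - P₀) + ρ) * T (1 / 2) + (P₀ - ρ) * T (1 - 1 / 2) ≤
          ((1 - P₀) + ρ) * T ψ + (P₀ - ρ) * T (1 - ψ)) ∧
    (ρ + (T 0 - T (1 / 2)) / (T 0 - T 1) ≤ P₀ →
      ∀ ψ ∈ Set.Icc (0 : ℝ) (1 / 2),
        ((1 - P₀) + ρ) * T 0 + (P₀ - ρ) * T 1 ≤
          ((1 - P₀) + ρ) * T ψ + (P₀ - ρ) * T (1 - ψ)) := by
  have h0m : (0:ℝ) ∈ Set.Icc (0:ℝ) 1 := by norm_num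
  have h1m : (1:ℝ) ∈ Set.Icc (0:ℝ) 1 := by norm_num
  have hhm : (1/2:ℝ) ∈ Set.Icc (0:ℝ) 1 := by norm_num
  have hT01 : T 1 < T 0 := hanti h0m h1m (by norm_num)
  have hpos : (0:ℝ) < T 0 - T 1 := by linarith
  set a := (1 - P₀) + ρ with ha_def
  set b := P₀ - ρ with hb_def
  have ha : 0 ≤ a := by
    have := hP₀.2; simp only [ha_def]; linarith
  have hb : 0 ≤ b := by simp only [hb_def]; linarith
  -- concavity consequence: for ψ ∈ [0,1/2],
  -- a*Tψ + b*T(1-ψ) ≥ (1-2ψ)*(a*T0 + b*T1) + 2ψ*T(1/2)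
  have key : ∀ ψ ∈ Set.Icc (0:ℝ) (1/2),
      (1 - 2*ψ) * (a * T 0 + b * T 1) + (2*ψ) * T (1/2)
        ≤ a * T ψ + b * T (1 - ψ) := by
    intro ψ hψ
    obtain ⟨hψ0, hψ1⟩ := hψ
    have hμ : (0:ℝ) ≤ 1 - 2*ψ := by linarith
    have hν : (0:ℝ) ≤ 2*ψ := by linarith
    have hμν : (1 - 2*ψ) + 2*ψ = 1 := by ring
    have h1 := hconc.2 h0m hhm hμ hν hμν
    have h2 := hconc.2 h1m hhm hμ hν hμν
    simp only [smul_eq_mul] at h1 h2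
    have e1 : (1 - 2*ψ) * 0 + 2*ψ * (1/2) = ψ := by ring
    have e2 : (1 - 2*ψ) * 1 + 2*ψ * (1/2) = 1 - ψ := by ring
    rw [e1] at h1
    rw [e2] at h2
    nlinarith [mul_le_mul_of_nonneg_left h1 ha, mul_le_mul_of_nonneg_left h2 hb]
  constructor
  · intro hle ψ hψ
    have hb_le : b * (T 0 - T 1) ≤ T 0 - T (1/2) := by
      have : b ≤ (T 0 - T (1/2)) / (T 0 - T 1) := by
        simp only [hb_def]; linarith
      calc b * (T 0 - T 1) ≤ (T 0 - T (1/2)) / (T 0 - T 1) * (T 0 - T 1) :=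
            mul_le_mul_of_nonneg_right this (le_of_lt hpos)
        _ = T 0 - T (1/2) := div_mul_cancel₀ _ (ne_of_gt hpos)
    -- so T(1/2) ≤ a*T0 + b*T1  (using a + b = 1)
    have hab : a + b = 1 := by simp only [ha_def, hb_def]; ring
    have hRhalf : T (1/2) ≤ a * T 0 + b * T 1 := by nlinarith
    have hk := key ψ hψ
    have hμ : (0:ℝ) ≤ 1 - 2*ψ := by linarith [hψ.2]
    have : (1:ℝ) - 1/2 = 1/2 := by norm_num
    rw [this]
    have h3 : T (1/2) ≤ (1 - 2*ψ) * (a * T 0 + b * T 1) + (2*ψ) * T (1/2) := by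
      nlinarith [mul_nonneg hμ (sub_nonneg.mpr hRhalf)]
    nlinarith [hk, h3]
  · intro hle ψ hψ
    have hb_ge : T 0 - T (1/2) ≤ b * (T 0 - T 1) := by
      have : (T 0 - T (1/2)) / (T 0 - T 1) ≤ b := by
        simp only [hb_def]; linarith
      calc T 0 - T (1/2) = (T 0 - T (1/2)) / (T 0 - T 1) * (T 0 - T 1) :=
            (div_mul_cancel₀ _ (ne_of_gt hpos)).symm
        _ ≤ b * (T 0 - T 1) := mul_le_mul_of_nonneg_right this (le_of_lt hpos)
    have hab : a + b = 1 := by simp only [ha_def, hb_def]; ring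
    have hRhalf : a * T 0 + b * T 1 ≤ T (1/2) := by nlinarith
    have hk := key ψ hψ
    have hν : (0:ℝ) ≤ 2*ψ := by linarith [hψ.1]
    have h3 : a * T 0 + b * T 1 ≤ (1 - 2*ψ) * (a * T 0 + b * T 1) + (2*ψ) * T (1/2) := by
      nlinarith [mul_nonneg hν (sub_nonneg.mpr hRhalf)]
    exact le_trans h3 hk
end

section
/- Let K ≥ 2, ρ ≥ 0, and P^{(1)} ≥ ... ≥ P^{(K)} ≥ 0 with Σ_j P^{(j)} = 1. For k ∈ [K], define V(k) = 1 + (1/k)·(ρ − Σ_{j=1}^k P^{(j)}) for k < K and V(K) = 1 − 1/K. If there exists k_0 ∈ [K−1] such that (1/k_0)·(Σ_{j=1}^{k_0} P^{(j)} − ρ) > 1/K and (1/k_0)·(Σ_{j=1}^{k_0} P^{(j)} − ρ) ≥ (1/k)·(Σ_{j=1}^{k} P^{(j)} − ρ) for all k ∈ [K−1], then V(k_0) = min_{k∈[K]} min{V(k), 1}, i.e., k_0 minimizes the multi-class robust risk over extreme-point actions. -/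
theorem multiclass_extreme_point_minimizer (K : ℕ) (hK : 2 ≤ K)
    (ρ : ℝ) (hρ : 0 ≤ ρ)
    (P : ℕ → ℝ)
    (hPsort : ∀ i j, i ≤ j → j < K → P j ≤ P i)
    (hPpos : ∀ j, j < K → 0 ≤ P j)
    (hPsum : ∑ j ∈ Finset.range K, P j = 1)
    (V : ℕ → ℝ)
    (hV : ∀ k, V k = if k < K then
        1 + (1 / (k : ℝ)) * (ρ - ∑ j ∈ Finset.range k, P j) else 1 - 1 / (K : ℝ))
    (k₀ : ℕ) (hk₀ : 1 ≤ k₀ ∧ k₀ ≤ K - 1)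
    (hgt : 1 / (K : ℝ) < (1 / (k₀ : ℝ)) * ((∑ j ∈ Finset.range k₀, P j) - ρ))
    (hmax : ∀ k, 1 ≤ k → k ≤ K - 1 →
      (1 / (k : ℝ)) * ((∑ j ∈ Finset.range k, P j) - ρ) ≤
        (1 / (k₀ : ℝ)) * ((∑ j ∈ Finset.range k₀, P j) - ρ)) :
    V k₀ = (Finset.Icc 1 K).inf' (Finset.nonempty_Icc.mpr (by omega))
      (fun k => min (V k) 1) := by
  obtain ⟨hk1, hk2⟩ := hk₀
  have hk₀K : k₀ < K := by omega
  have hVk₀ : V k₀ = 1 - (1 / (k₀ : ℝ)) * ((∑ j ∈ Finset.range k₀, P j) - ρ) := by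
    rw [hV]; simp only [hk₀K, if_true]; ring
  have hKpos : (0:ℝ) < 1 / K := by
    have : (0:ℝ) < K := by positivity
    positivity
  have hle1 : V k₀ ≤ 1 := by rw [hVk₀]; linarith
  apply le_antisymm
  · apply Finset.le_inf'
    intro k hk
    simp only [Finset.mem_Icc] at hk
    refine le_min ?_ hle1
    rcases lt_or_ge k K with hkK | hkK
    · have := hmax k hk.1 (by omega)
      rw [hVk₀, hV]
      simp only [hkK, if_true]
      linarith
    · have hkeq : ¬ (k < K) := by omega
      rw [hVk₀, hV]
      simp only [hkeq, if_false]
      linarith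
  · apply Finset.inf'_le_of_le (b := k₀)
    · simp only [Finset.mem_Icc]; omega
    · exact min_le_left _ _
end

section
/- Under the setup of the piecewise-affine function h(γ) = γε^p + (1/n)·Σ_{t=1}^{nK} P^{(t)}·(α^{(t)} − γκ^p)·1(α^{(t)} > γκ^p) with ρ = ε^p/κ^p: if (1/n)P^{(1)} < ρ < (1/n)·Σ_{t=1}^{nK} P^{(t)}, and s* ∈ {2,...,nK} is such that (1/n)Σ_{t=1}^s P^{(t)} < ρ for s < s* and (1/n)Σ_{t=1}^s P^{(t)} ≥ ρ for s ≥ s*, then inf_{γ≥0} h(γ) = h(α^{(s*)}/κ^p) = (1/n)·Σ_{t=1}^{s*−1} P^{(t)} α^{(t)} + α^{(s*)}·(ρ − (1/n)Σ_{t=1}^{s*−1} P^{(t)}), and the correction term satisfies 0 < ρ − (1/n)Σ_{t=1}^{s*−1} P^{(t)} ≤ 1/n. -/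
theorem empirical_dual_objective_min (n K : ℕ) (hn : 1 ≤ n) (hK : 1 ≤ K)
    (ε κ p : ℝ) (hε : 0 < ε) (hκ : 0 < κ) (hp : 1 ≤ p)
    (α P : ℕ → ℝ)
    (hαsort : ∀ i j, 1 ≤ i → i ≤ j → j ≤ n * K → α j ≤ α i)
    (hαpos : ∀ t, 1 ≤ t → t ≤ n * K → 0 ≤ α t)
    (hP : ∀ t, 1 ≤ t → t ≤ n * K → P t ∈ Set.Icc (0 : ℝ) 1)
    (h : ℝ → ℝ)
    (hh : ∀ γ, h γ = γ * ε ^ p + (1 / (n : ℝ)) * ∑ t ∈ Finset.Icc 1 (n * K),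
        P t * ((α t - γ * κ ^ p) * if γ * κ ^ p < α t then 1 else 0))
    (hlow : (1 / (n : ℝ)) * P 1 < ε ^ p / κ ^ p)
    (hup : ε ^ p / κ ^ p < (1 / (n : ℝ)) * ∑ t ∈ Finset.Icc 1 (n * K), P t)
    (s : ℕ) (hs : 2 ≤ s ∧ s ≤ n * K)
    (hslt : ∀ s', 1 ≤ s' → s' < s →
      (1 / (n : ℝ)) * ∑ t ∈ Finset.Icc 1 s', P t < ε ^ p / κ ^ p)
    (hsge : ∀ s', s ≤ s' → s' ≤ n * K →
      ε ^ p / κ ^ p ≤ (1 / (n : ℝ)) * ∑ t ∈ Finset.Icc 1 s', P t) :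
    (∀ γ : ℝ, 0 ≤ γ → h (α s / κ ^ p) ≤ h γ) ∧
    h (α s / κ ^ p) =
      (1 / (n : ℝ)) * (∑ t ∈ Finset.Icc 1 (s - 1), P t * α t) +
        α s * (ε ^ p / κ ^ p - (1 / (n : ℝ)) * ∑ t ∈ Finset.Icc 1 (s - 1), P t) ∧
    0 < ε ^ p / κ ^ p - (1 / (n : ℝ)) * ∑ t ∈ Finset.Icc 1 (s - 1), P t ∧
    ε ^ p / κ ^ p - (1 / (n : ℝ)) * ∑ t ∈ Finset.Icc 1 (s - 1), P t ≤ 1 / (n : ℝ) := by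
  obtain ⟨hs2, hsK⟩ := hs
  have npos : (0:ℝ) < n := by exact_mod_cast hn
  have kpos : (0:ℝ) < κ ^ p := Real.rpow_pos_of_pos hκ p
  set ρ : ℝ := ε ^ p / κ ^ p with hρ
  set Sp : ℝ := ∑ t ∈ Finset.Icc 1 (s-1), P t with hSpdef
  set Spa : ℝ := ∑ t ∈ Finset.Icc 1 (s-1), P t * α t with hSpadef
  have hs1 : 1 ≤ s - 1 := by omega
  have hPs := hP s (by omega) hsK
  have hsum_s : ∑ t ∈ Finset.Icc 1 s, P t = Sp + P s := by
    have hseq : s = (s-1) + 1 := by omega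
    rw [hseq, Finset.sum_Icc_succ_top (by omega), ← hseq]
  -- fact1 : Sp < n * ρ
  have fact1 : Sp < (n:ℝ) * ρ := by
    have h1 := hslt (s-1) hs1 (by omega)
    rw [← hSpdef, one_div, inv_mul_eq_div, div_lt_iff₀ npos] at h1
    linarith
  have fact2 : (n:ℝ) * ρ ≤ Sp + P s := by
    have h1 := hsge s le_rfl hsK
    rw [hsum_s, one_div, inv_mul_eq_div, le_div_iff₀ npos] at h1
    linarith
  have conc3 : 0 < ρ - (1 / (n:ℝ)) * Sp := by
    have h1 := hslt (s-1) hs1 (by omega)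
    rw [← hSpdef] at h1
    linarith
  have conc4 : ρ - (1 / (n:ℝ)) * Sp ≤ 1 / (n:ℝ) := by
    have hn1 : (0:ℝ) < 1 / n := by positivity
    have : ρ ≤ (1/(n:ℝ)) * Sp + (1/(n:ℝ)) * P s := by
      have := fact2
      rw [div_mul_eq_mul_div, div_mul_eq_mul_div, ← add_div, le_div_iff₀ npos]
      nlinarith
    nlinarith [hPs.2, hn1]
  -- value at the minimizer
  have hval : h (α s / κ ^ p) =
      (1/(n:ℝ)) * Spa + α s * (ρ - (1/(n:ℝ)) * Sp) := by
    rw [hh]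
    have hcancel : α s / κ ^ p * κ ^ p = α s := div_mul_cancel₀ _ (ne_of_gt kpos)
    rw [hcancel]
    have hsum : ∑ t ∈ Finset.Icc 1 (n*K), P t * ((α t - α s) * if α s < α t then 1 else 0)
        = ∑ t ∈ Finset.Icc 1 (s-1), P t * (α t - α s) := by
      rw [← Finset.sum_subset (Finset.Icc_subset_Icc_right (by omega : s - 1 ≤ n * K))]
      · apply Finset.sum_congr rfl
        intro t ht
        rw [Finset.mem_Icc] at ht
        rcases lt_or_ge (α s) (α t) with hlt | hle
        · rw [if_pos hlt, mul_one]
        · have hts : α s ≤ α t := hαsort t s ht.1 (by omega) hsK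
          have : α t = α s := le_antisymm hle hts
          simp [this]
      · intro t ht htn
        rw [Finset.mem_Icc] at ht htn
        have hst : α t ≤ α s := hαsort s t (by omega) (by omega) ht.2
        rw [if_neg (not_lt.mpr hst)]
        ring
    rw [hsum]
    have hexp : ∑ t ∈ Finset.Icc 1 (s-1), P t * (α t - α s) = Spa - Sp * α s := by
      rw [hSpadef, hSpdef, Finset.sum_mul, ← Finset.sum_sub_distrib]
      apply Finset.sum_congr rfl
      intro t _; ring
    rw [hexp, hρ]
    field_simp
    ring
  -- lower bound : V ≤ h γ for every γ
  have hmin : ∀ γ : ℝ, (1/(n:ℝ)) * Spa + α s * (ρ - (1/(n:ℝ)) * Sp) ≤ h γ := by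
    intro γ
    rw [hh]
    have hdisj : Disjoint (Finset.Icc 1 (s-1)) (Finset.Icc s (n*K)) := by
      rw [Finset.disjoint_left]
      intro a ha hb
      rw [Finset.mem_Icc] at ha hb
      omega
    have hunion : Finset.Icc 1 (s-1) ∪ Finset.Icc s (n*K) = Finset.Icc 1 (n*K) := by
      ext x
      simp only [Finset.mem_union, Finset.mem_Icc]
      omega
    rw [← hunion, Finset.sum_union hdisj]
    have hins : Finset.Icc s (n*K) = insert s (Finset.Icc (s+1) (n*K)) := by
      ext x
      simp only [Finset.mem_insert, Finset.mem_Icc]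
      omega
    rw [hins, Finset.sum_insert (by simp)]
    set f : ℕ → ℝ := fun t => P t * ((α t - γ * κ ^ p) * if γ * κ ^ p < α t then 1 else 0) with hf
    have b1 : ∑ t ∈ Finset.Icc 1 (s-1), P t * (α t - γ * κ ^ p)
        ≤ ∑ t ∈ Finset.Icc 1 (s-1), f t := by
      apply Finset.sum_le_sum
      intro t ht
      rw [Finset.mem_Icc] at ht
      have hP0 := (hP t ht.1 (by omega)).1
      rcases lt_or_ge (γ * κ ^ p) (α t) with hlt | hle
      · rw [hf]; simp only [if_pos hlt, mul_one]; exact le_rfl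
      · rw [hf]; simp only [if_neg (not_lt.mpr hle), mul_zero]
        nlinarith
    have b2 : ((n:ℝ) * ρ - Sp) * (α s - γ * κ ^ p) ≤ f s := by
      have hw0 : 0 ≤ (n:ℝ) * ρ - Sp := le_of_lt (by linarith)
      have hw1 : (n:ℝ) * ρ - Sp ≤ P s := by linarith
      rcases lt_or_ge (γ * κ ^ p) (α s) with hlt | hle
      · rw [hf]; simp only [if_pos hlt, mul_one]
        apply mul_le_mul_of_nonneg_right hw1 (by linarith)
      · rw [hf]; simp only [if_neg (not_lt.mpr hle), mul_zero, mul_zero]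
        apply mul_nonpos_of_nonneg_of_nonpos hw0 (by linarith)
    have b3 : (0:ℝ) ≤ ∑ t ∈ Finset.Icc (s+1) (n*K), f t := by
      apply Finset.sum_nonneg
      intro t ht
      rw [Finset.mem_Icc] at ht
      have hP0 := (hP t (by omega) ht.2).1
      rw [hf]
      rcases lt_or_ge (γ * κ ^ p) (α t) with hlt | hle
      · simp only [if_pos hlt, mul_one]
        exact mul_nonneg hP0 (by linarith)
      · simp only [if_neg (not_lt.mpr hle), mul_zero, mul_zero]
        exact le_refl 0
    have hexp : ∑ t ∈ Finset.Icc 1 (s-1), P t * (α t - γ * κ ^ p)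
        = Spa - γ * κ ^ p * Sp := by
      rw [hSpadef, hSpdef, Finset.mul_sum, ← Finset.sum_sub_distrib]
      apply Finset.sum_congr rfl
      intro t _; ring
    have key : γ * ε ^ p + (1/(n:ℝ)) *
        ((Spa - γ * κ ^ p * Sp) + (((n:ℝ) * ρ - Sp) * (α s - γ * κ ^ p) + 0))
        = (1/(n:ℝ)) * Spa + α s * (ρ - (1/(n:ℝ)) * Sp) := by
      rw [hρ]
      field_simp
      ring
    have hbig : (Spa - γ * κ ^ p * Sp) + (((n:ℝ) * ρ - Sp) * (α s - γ * κ ^ p) + 0)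
        ≤ ∑ t ∈ Finset.Icc 1 (s-1), f t + (f s + ∑ t ∈ Finset.Icc (s+1) (n*K), f t) := by
      rw [← hexp] at *
      linarith
    have hmul := mul_le_mul_of_nonneg_left hbig (le_of_lt (by positivity : (0:ℝ) < 1/(n:ℝ)))
    show (1/(n:ℝ)) * Spa + α s * (ρ - (1/(n:ℝ)) * Sp) ≤ γ * ε ^ p +
      (1/(n:ℝ)) * (∑ t ∈ Finset.Icc 1 (s-1), f t + (f s + ∑ t ∈ Finset.Icc (s+1) (n*K), f t))
    linarith [key, hmul]
  refine ⟨fun γ _ => by rw [hval]; exact hmin γ, hval, conc3, conc4⟩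
end

section
/- Let ℓ : X × Y → [0,∞) be L-Lipschitz in its second argument with respect to c(y,y') = κ·1(y≠y') on a finite label set Y, p ≥ 1, ε > 0, and let P be any conditional reference distribution on Y. Define F(γ) = γε^p + E_{(X,Ỹ)}[ E_{Y∼P}[ max_{y'∈Y}( ℓ(X,y') − γ c^p(y',Y) ) ] ]. Then any minimizer γ* of F over [0,∞) satisfies γ* ≤ L·ε^{−(p−1)}. -/
/-!
Write `φ_γ(x, y) = max_{y'} (ℓ(x, y') - γ c^p(y', y))` for the robust surrogate. Taking `y' = y`
gives `φ_γ ≥ ℓ(x, y)`, and since `c ∈ {0, κ}` the Lipschitz bound gives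
`φ_γ ≤ ℓ(x, y) + (Lκ - γκ^p)⁺`. Hence `F(γ) = γε^p + G + r(γ)` with `0 ≤ r(γ) ≤ (Lκ - γκ^p)⁺`.
Comparing a minimizer `γ*` with `γ = 0` gives `γ* ε^p ≤ Lκ`, and comparing it with
`γ = Lκ/κ^p`, where `r` vanishes, gives `γ* κ^p ≤ Lκ`. Whichever of `ε`, `κ` is smaller,
one of these two inequalities yields `γ* ε^(p-1) ≤ L`.
-/

open MeasureTheory Finset

section RobustSurrogate

variable {Y : Type*} [Fintype Y] [DecidableEq Y] [Nonempty Y]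

/-- The inner maximum in the dual objective `F`. -/
noncomputable def robustSurrogate (f : Y → ℝ) (γ κ p : ℝ) (y : Y) : ℝ :=
  univ.sup' univ_nonempty fun y' => f y' - γ * (κ * if y' = y then 0 else 1) ^ p

variable {f : Y → ℝ} {γ κ p L : ℝ}

lemma le_robustSurrogate (hp : p ≠ 0) (y : Y) : f y ≤ robustSurrogate f γ κ p y := by
  have h := le_sup' (fun y' => f y' - γ * (κ * if y' = y then 0 else 1) ^ p) (mem_univ y)
  rwa [if_pos rfl, mul_zero, Real.zero_rpow hp, mul_zero, sub_zero] at h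

lemma robustSurrogate_le (hp : p ≠ 0) (hlip : ∀ y₁ y₂, y₁ ≠ y₂ → f y₁ - f y₂ ≤ L * κ)
    (y : Y) : robustSurrogate f γ κ p y ≤ f y + max 0 (L * κ - γ * κ ^ p) := by
  refine sup'_le _ _ fun y' _ => ?_
  by_cases hy : y' = y
  · simp [hy, Real.zero_rpow hp]
  · have := hlip y' y hy
    simp only [hy, if_false, mul_one]
    linarith [le_max_right 0 (L * κ - γ * κ ^ p)]

lemma robustSurrogate_eq_self (hp : p ≠ 0) (hlip : ∀ y₁ y₂, y₁ ≠ y₂ → f y₁ - f y₂ ≤ L * κ)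
    (hγ : L * κ ≤ γ * κ ^ p) (y : Y) : robustSurrogate f γ κ p y = f y := by
  refine le_antisymm ?_ (le_robustSurrogate hp y)
  simpa [max_eq_left (sub_nonpos.mpr hγ)] using robustSurrogate_le (γ := γ) hp hlip y

variable {P : Y → ℝ}

lemma sum_mul_le_sum_mul_robustSurrogate (hP : ∀ y, 0 ≤ P y) (hp : p ≠ 0) :
    ∑ y, P y * f y ≤ ∑ y, P y * robustSurrogate f γ κ p y :=
  sum_le_sum fun y _ => mul_le_mul_of_nonneg_left (le_robustSurrogate hp y) (hP y)

lemma sum_mul_robustSurrogate_le (hP : ∀ y, 0 ≤ P y) (hPsum : ∑ y, P y = 1) (hp : p ≠ 0)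
    (hlip : ∀ y₁ y₂, y₁ ≠ y₂ → f y₁ - f y₂ ≤ L * κ) :
    ∑ y, P y * robustSurrogate f γ κ p y ≤
      ∑ y, P y * f y + max 0 (L * κ - γ * κ ^ p) :=
  calc ∑ y, P y * robustSurrogate f γ κ p y
      ≤ ∑ y, P y * (f y + max 0 (L * κ - γ * κ ^ p)) :=
        sum_le_sum fun y _ => mul_le_mul_of_nonneg_left (robustSurrogate_le hp hlip y) (hP y)
    _ = ∑ y, P y * f y + max 0 (L * κ - γ * κ ^ p) := by
        simp only [mul_add, sum_add_distrib, ← sum_mul, hPsum, one_mul]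

end RobustSurrogate

/-- The two comparisons a minimizer of `γ a + G + r(γ)` with `0 ≤ r(γ) ≤ (b - γ c)⁺` admits:
against `γ = 0` and against `γ = b / c`. -/
lemma minimizer_mul_le_of_sandwich {F : ℝ → ℝ} {a b c G γs : ℝ} (ha : 0 < a) (hb : 0 ≤ b)
    (hc : 0 < c) (hlow : γs * a + G ≤ F γs)
    (hup : ∀ γ, 0 ≤ γ → F γ ≤ γ * a + G + max 0 (b - γ * c))
    (hmin : ∀ γ, 0 ≤ γ → F γs ≤ F γ) :
    γs * a ≤ b ∧ γs * c ≤ b := by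
  have hbc : 0 ≤ b / c := div_nonneg hb hc.le
  have hzero := hlow.trans ((hmin 0 le_rfl).trans (hup 0 le_rfl))
  have hopt := hlow.trans ((hmin _ hbc).trans (hup _ hbc))
  rw [zero_mul, zero_mul, sub_zero, max_eq_right hb] at hzero
  rw [div_mul_cancel₀ b hc.ne', sub_self, max_self] at hopt
  refine ⟨by linarith, ?_⟩
  rw [← le_div_iff₀ hc]
  exact le_of_mul_le_mul_right (by linarith) ha

lemma mul_rpow_sub_one_le_of_mul_rpow_le {γ ε κ p L : ℝ} (hγ : 0 ≤ γ) (hε : 0 < ε) (hκ : 0 < κ)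
    (hp : 1 ≤ p) (hL : 0 ≤ L) (hγε : γ * ε ^ p ≤ L * κ) (hγκ : γ * κ ^ p ≤ L * κ) :
    γ * ε ^ (p - 1) ≤ L := by
  have hsplit : ∀ {t : ℝ}, 0 < t → t ^ p = t ^ (p - 1) * t := fun ht => by
    rw [← Real.rpow_add_one ht.ne', sub_add_cancel]
  rcases le_total κ ε with hκε | hεκ
  · rw [hsplit hε, ← mul_assoc] at hγε
    exact le_of_mul_le_mul_right (hγε.trans (mul_le_mul_of_nonneg_left hκε hL)) hε
  · rw [hsplit hκ, ← mul_assoc] at hγκ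
    calc γ * ε ^ (p - 1) ≤ γ * κ ^ (p - 1) :=
          mul_le_mul_of_nonneg_left
            (Real.rpow_le_rpow hε.le hεκ (sub_nonneg.mpr hp)) hγ
      _ ≤ L := le_of_mul_le_mul_right hγκ hκ

theorem optimal_lagrange_multiplier_bound_general {X Y : Type*} [Fintype Y] [DecidableEq Y] [Nonempty Y]
    {Ω : Type*} [MeasurableSpace Ω] (μ : Measure Ω) [IsProbabilityMeasure μ]
    (ℓ : X → Y → ℝ) (L κ ε p : ℝ) (hL : 0 ≤ L) (hκ : 0 < κ) (hε : 0 < ε) (hp : 1 ≤ p)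
    (hlip : ∀ x y₁ y₂, |ℓ x y₁ - ℓ x y₂| ≤ L * (κ * if y₁ = y₂ then 0 else 1))
    (Xf : Ω → X) (P : Ω → Y → ℝ) (hP : ∀ ω y, 0 ≤ P ω y) (hPsum : ∀ ω, ∑ y, P ω y = 1)
    (F : ℝ → ℝ)
    (hF : ∀ γ : ℝ, F γ = γ * ε ^ p +
      ∫ ω, (∑ y, P ω y * (Finset.univ.sup' Finset.univ_nonempty
        fun y' => ℓ (Xf ω) y' - γ * (κ * if y' = y then 0 else 1) ^ p)) ∂μ)
    (hint : ∀ γ : ℝ, 0 ≤ γ →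
      Integrable (fun ω => ∑ y, P ω y * (Finset.univ.sup' Finset.univ_nonempty
        fun y' => ℓ (Xf ω) y' - γ * (κ * if y' = y then 0 else 1) ^ p)) μ)
    (γs : ℝ) (hγs : 0 ≤ γs) (hmin : ∀ γ : ℝ, 0 ≤ γ → F γs ≤ F γ) :
    γs ≤ L * ε ^ (-(p - 1)) := by
  have hp0 : p ≠ 0 := by positivity
  have hκp : 0 < κ ^ p := Real.rpow_pos_of_pos hκ p
  have hlip' : ∀ x y₁ y₂, y₁ ≠ y₂ → ℓ x y₁ - ℓ x y₂ ≤ L * κ := fun x y₁ y₂ hne => by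
    simpa [hne] using (abs_le.mp (hlip x y₁ y₂)).2
  set g : Ω → ℝ := fun ω => ∑ y, P ω y * ℓ (Xf ω) y
  have hg : Integrable g μ := by
    refine (hint (L * κ / κ ^ p) (by positivity)).congr (ae_of_all _ fun ω => ?_)
    refine sum_congr rfl fun y _ => congrArg (P ω y * ·) ?_
    exact robustSurrogate_eq_self hp0 (hlip' _) (div_mul_cancel₀ _ hκp.ne').ge y
  have hlow : γs * ε ^ p + ∫ ω, g ω ∂μ ≤ F γs := by
    rw [hF]
    exact add_le_add le_rfl (integral_mono hg (hint γs hγs)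
      fun ω => sum_mul_le_sum_mul_robustSurrogate (hP ω) hp0)
  have hup : ∀ γ, 0 ≤ γ → F γ ≤ γ * ε ^ p + ∫ ω, g ω ∂μ + max 0 (L * κ - γ * κ ^ p) := by
    intro γ hγ
    have hmono := integral_mono (hint γ hγ) (hg.add (integrable_const _))
      fun ω => sum_mul_robustSurrogate_le (hP ω) (hPsum ω) hp0 (hlip' _)
    simp only [Pi.add_apply] at hmono
    rw [integral_add hg (integrable_const _), integral_const, probReal_univ, one_smul] at hmono
    rw [hF, add_assoc]
    exact add_le_add le_rfl hmono
  obtain ⟨hγε, hγκ⟩ := minimizer_mul_le_of_sandwich (Real.rpow_pos_of_pos hε p)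
    (mul_nonneg hL hκ.le) hκp hlow hup hmin
  rw [Real.rpow_neg hε.le, ← div_eq_mul_inv, le_div_iff₀ (Real.rpow_pos_of_pos hε _)]
  exact mul_rpow_sub_one_le_of_mul_rpow_le hγs hε hκ hp hL hγε hγκ

theorem optimal_lagrange_multiplier_bound {X Y : Type*} [Fintype Y] [DecidableEq Y] [Nonempty Y]
    {Ω : Type*} [MeasurableSpace Ω] (μ : Measure Ω) [IsProbabilityMeasure μ]
    (ℓ : X → Y → ℝ) (L κ ε p : ℝ) (hL : 0 ≤ L) (hκ : 0 < κ) (hε : 0 < ε) (hp : 1 ≤ p)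
    (hnonneg : ∀ x y, 0 ≤ ℓ x y)
    (hlip : ∀ x y₁ y₂, |ℓ x y₁ - ℓ x y₂| ≤ L * (κ * if y₁ = y₂ then 0 else 1))
    (Xf : Ω → X) (P : Ω → Y → ℝ) (hP : ∀ ω y, 0 ≤ P ω y) (hPsum : ∀ ω, ∑ y, P ω y = 1)
    (F : ℝ → ℝ)
    (hF : ∀ γ : ℝ, F γ = γ * ε ^ p +
      ∫ ω, (∑ y, P ω y * (Finset.univ.sup' Finset.univ_nonempty
        fun y' => ℓ (Xf ω) y' - γ * (κ * if y' = y then 0 else 1) ^ p)) ∂μ)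
    (hint : ∀ γ : ℝ, 0 ≤ γ →
      Integrable (fun ω => ∑ y, P ω y * (Finset.univ.sup' Finset.univ_nonempty
        fun y' => ℓ (Xf ω) y' - γ * (κ * if y' = y then 0 else 1) ^ p)) μ)
    (γs : ℝ) (hγs : 0 ≤ γs) (hmin : ∀ γ : ℝ, 0 ≤ γ → F γs ≤ F γ) :
    γs ≤ L * ε ^ (-(p - 1)) :=
  optimal_lagrange_multiplier_bound_general μ ℓ L κ ε p hL hκ hε hp hlip Xf P hP hPsum F hF hint γs
    hγs hmin
end

section
/- Let X_1,...,X_n be independent random variables taking values in a space Ω, and let f : Ω^n → ℝ satisfy the bounded differences property with constants L_1,...,L_n: for each k, changing only the k-th coordinate changes f by at most L_k. Then for every t ≥ 0, P[f(X_1,...,X_n) − E f(X_1,...,X_n) ≥ t] ≤ exp(−2t² / Σ_{i=1}^n L_i²). -/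
/-!
Induct on the number of coordinates, peeling off the first one. Write
`f x - E f = (G x₀ - E G) + (f x - G x₀)` with `G x₀ = E [f | X₀ = x₀]`. Bounded differences
in the first coordinate confine `G` to an interval of length `L₀`, so Hoeffding's lemma makes
`G - E G` sub-Gaussian with parameter `L₀² / 4`; for each fixed `x₀` the second term is, by
induction, sub-Gaussian with parameter `∑_{i ≥ 1} Lᵢ² / 4`. Under a product measure the
moment generating function of such a sum factors fibrewise, so the parameters add, and the
Chernoff bound for parameter `∑ Lᵢ² / 4` is the claimed `exp (-2 t² / ∑ Lᵢ²)`.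
-/

open MeasureTheory ProbabilityTheory Real
open scoped NNReal

namespace ProbabilityTheory

variable {α β : Type*} [MeasurableSpace α] [MeasurableSpace β] {μ : Measure α} {ν : Measure β}

lemma hasSubgaussianMGF_map_iff {X : β → ℝ} {Y : α → β} {c : ℝ≥0} (hX : Measurable X)
    (hY : Measurable Y) : HasSubgaussianMGF X c (μ.map Y) ↔ HasSubgaussianMGF (X ∘ Y) c μ := by
  rw [← HasSubgaussianMGF.id_map_iff hX.aemeasurable, Measure.map_map hX hY,
    HasSubgaussianMGF.id_map_iff (hX.comp hY).aemeasurable]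

lemma HasSubgaussianMGF.add_prod [SFinite μ] [SFinite ν] {X : α → ℝ} {Y : α × β → ℝ}
    {cX cY : ℝ≥0} (hX : HasSubgaussianMGF X cX μ) (hY_meas : Measurable Y)
    (hY : ∀ a, HasSubgaussianMGF (fun b ↦ Y (a, b)) cY ν) :
    HasSubgaussianMGF (fun p ↦ X p.1 + Y p) (cX + cY) (μ.prod ν) := by
  have fiber (t : ℝ) (a : α) :
      ∫ b, exp (t * (X a + Y (a, b))) ∂ν = exp (t * X a) * mgf (fun b ↦ Y (a, b)) ν t := by
    simp_rw [mul_add, exp_add, mgf, integral_const_mul]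
  have hmeas (t : ℝ) :
      AEStronglyMeasurable (fun p : α × β ↦ exp (t * (X p.1 + Y p))) (μ.prod ν) :=
    ((hX.aemeasurable.comp_fst.add hY_meas.aemeasurable).const_mul t).exp.aestronglyMeasurable
  have hint (t : ℝ) : Integrable (fun p ↦ exp (t * (X p.1 + Y p))) (μ.prod ν) := by
    refine (integrable_prod_iff (hmeas t)).2 ⟨ae_of_all _ fun a ↦ ?_, ?_⟩
    · simp_rw [mul_add, exp_add]
      exact ((hY a).integrable_exp_mul t).const_mul _
    refine ((hX.integrable_exp_mul t).mul_const (exp (cY * t ^ 2 / 2))).mono'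
      (hmeas t).norm.integral_prod_right' (ae_of_all _ fun a ↦ ?_)
    simp only [Real.norm_eq_abs, abs_exp]
    rw [abs_of_nonneg (integral_nonneg fun _ ↦ (exp_pos _).le), fiber]
    gcongr
    exact (hY a).mgf_le t
  refine ⟨hint, fun t ↦ ?_⟩
  calc mgf (fun p ↦ X p.1 + Y p) (μ.prod ν) t
      = ∫ a, exp (t * X a) * mgf (fun b ↦ Y (a, b)) ν t ∂μ := by
        rw [mgf, integral_prod _ (hint t)]
        simp_rw [fiber]
    _ ≤ ∫ a, exp (t * X a) * exp (cY * t ^ 2 / 2) ∂μ :=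
        integral_mono_of_nonneg (ae_of_all _ fun a ↦ mul_nonneg (exp_nonneg _) mgf_nonneg)
          ((hX.integrable_exp_mul t).mul_const _)
          (ae_of_all _ fun a ↦ mul_le_mul_of_nonneg_left ((hY a).mgf_le t) (exp_nonneg _))
    _ = mgf X μ t * exp (cY * t ^ 2 / 2) := by rw [integral_mul_const, mgf]
    _ ≤ exp (cX * t ^ 2 / 2) * exp (cY * t ^ 2 / 2) := by gcongr; exact hX.mgf_le t
    _ = exp (↑(cX + cY) * t ^ 2 / 2) := by rw [← exp_add]; push_cast; ring_nf

end ProbabilityTheory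

lemma exists_forall_mem_Icc_of_abs_sub_le {α : Type*} {g : α → ℝ} {L : ℝ}
    (h : ∀ x y, |g x - g y| ≤ L) : ∃ a, ∀ x, g x ∈ Set.Icc a (a + L) := by
  rcases isEmpty_or_nonempty α with _ | _
  · exact ⟨0, isEmptyElim⟩
  let x₀ := Classical.arbitrary α
  have hbdd : BddBelow (Set.range g) :=
    ⟨g x₀ - L, Set.forall_mem_range.2 fun y ↦ by linarith [(abs_le.1 (h x₀ y)).2]⟩
  refine ⟨⨅ x, g x, fun x ↦ ⟨ciInf_le hbdd x, ?_⟩⟩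
  have : g x - L ≤ ⨅ y, g y := le_ciInf fun y ↦ by linarith [(abs_le.1 (h x y)).2]
  linarith

lemma measurePreserving_finCons {Ω : Type*} [MeasurableSpace Ω] {n : ℕ}
    (κ : Fin (n + 1) → Measure Ω) [∀ i, SigmaFinite (κ i)] :
    MeasurePreserving (fun p : Ω × (Fin n → Ω) ↦ (Fin.cons p.1 p.2 : Fin (n + 1) → Ω))
      ((κ 0).prod (Measure.pi fun j ↦ κ j.succ)) (Measure.pi κ) := by
  have h := (measurePreserving_piFinSuccAbove κ 0).symm
  simp only [Fin.succAbove_zero] at h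
  convert h using 1
  funext p
  simp [Fin.consEquiv]

def HasBoundedDifferences {ι Ω : Type*} [DecidableEq ι] (f : (ι → Ω) → ℝ) (L : ι → ℝ) : Prop :=
  ∀ (k : ι) (x : ι → Ω) (x' : Ω), |f x - f (Function.update x k x')| ≤ L k

namespace HasBoundedDifferences

variable {Ω : Type*} {n : ℕ} {f : (Fin (n + 1) → Ω) → ℝ} {L : Fin (n + 1) → ℝ}

lemma comp_cons (h : HasBoundedDifferences f L) (a : Ω) :
    HasBoundedDifferences (fun r ↦ f (Fin.cons a r)) fun j ↦ L j.succ := by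
  intro k r x'
  change |f (Fin.cons a r) - f (Fin.cons a (Function.update r k x'))| ≤ L k.succ
  rw [Fin.cons_update]
  exact h k.succ _ _

lemma abs_sub_cons_le (h : HasBoundedDifferences f L) (a a' : Ω) (r : Fin n → Ω) :
    |f (Fin.cons a r) - f (Fin.cons a' r)| ≤ L 0 := by
  simpa only [Fin.update_cons_zero] using h 0 (Fin.cons a r) a'

end HasBoundedDifferences

theorem HasBoundedDifferences.hasSubgaussianMGF_sub_integral_pi {Ω : Type*} [MeasurableSpace Ω]
    {n : ℕ} (κ : Fin n → Measure Ω) [∀ i, IsProbabilityMeasure (κ i)] {f : (Fin n → Ω) → ℝ}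
    {L : Fin n → ℝ} (hf : Measurable f) (hbd : HasBoundedDifferences f L) :
    HasSubgaussianMGF (fun x ↦ f x - ∫ y, f y ∂Measure.pi κ) (∑ i, (‖L i‖₊ / 2) ^ 2)
      (Measure.pi κ) := by
  induction n with
  | zero =>
    have hconst (x : Fin 0 → Ω) : f x = f default := congrArg f (Subsingleton.elim x default)
    simp_rw [hconst, integral_const, probReal_univ, one_smul, sub_self, Finset.univ_eq_empty,
      Finset.sum_empty]
    exact .fun_zero
  | succ n ih =>
    have hcons := measurePreserving_finCons κ
    set ν := Measure.pi fun j : Fin n ↦ κ j.succ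
    set G : Ω → ℝ := fun a ↦ ∫ r, f (Fin.cons a r) ∂ν
    have hG_meas : Measurable G :=
      (hf.comp hcons.measurable).stronglyMeasurable.integral_prod_right'.measurable
    have hfiber (a : Ω) : HasSubgaussianMGF (fun r ↦ f (Fin.cons a r) - G a)
        (∑ j : Fin n, (‖L j.succ‖₊ / 2) ^ 2) ν :=
      ih (fun j ↦ κ j.succ) (hf.comp (hcons.measurable.comp measurable_prodMk_left))
        (hbd.comp_cons a)
    have hG_diff (a a' : Ω) : |G a - G a'| ≤ L 0 := by
      have hint (a : Ω) : Integrable (fun r ↦ f (Fin.cons a r)) ν := by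
        simpa using (integrable_add_const_iff (c := G a)).2 (hfiber a).integrable
      rw [← integral_sub (hint a) (hint a')]
      simpa using norm_integral_le_of_norm_le_const (μ := ν)
        (f := fun r ↦ f (Fin.cons a r) - f (Fin.cons a' r))
        (ae_of_all _ fun r ↦ hbd.abs_sub_cons_le a a' r)
    obtain ⟨c, hc⟩ := exists_forall_mem_Icc_of_abs_sub_le hG_diff
    have hhead := hasSubgaussianMGF_of_mem_Icc hG_meas.aemeasurable (ae_of_all (κ 0) hc)
    rw [add_sub_cancel_left] at hhead
    have hsum : HasSubgaussianMGF (fun p : Ω × (Fin n → Ω) ↦ f (Fin.cons p.1 p.2) - ∫ a, G a ∂κ 0)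
        ((‖L 0‖₊ / 2) ^ 2 + ∑ j : Fin n, (‖L j.succ‖₊ / 2) ^ 2) ((κ 0).prod ν) :=
      (hhead.add_prod (hf.comp hcons.measurable |>.sub (hG_meas.comp measurable_fst))
        hfiber).congr (ae_of_all _ fun p ↦ by simp only [Function.comp_apply, Pi.sub_apply]; ring)
    have hmean : ∫ x, f x ∂Measure.pi κ = ∫ a, G a ∂κ 0 := by
      have hint : Integrable (fun p : Ω × (Fin n → Ω) ↦ f (Fin.cons p.1 p.2)) ((κ 0).prod ν) := by
        simpa using (integrable_add_const_iff (c := ∫ a, G a ∂κ 0)).2 hsum.integrable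
      rw [← hcons.map_eq, integral_map hcons.measurable.aemeasurable hf.aestronglyMeasurable,
        integral_prod _ hint]
    rw [hmean, ← hcons.map_eq, hasSubgaussianMGF_map_iff (hf.sub_const _) hcons.measurable,
      Fin.sum_univ_succ]
    exact hsum

theorem mcdiarmid_bounded_differences {Ω : Type*} [MeasurableSpace Ω]
    {Ωp : Type*} [MeasurableSpace Ωp] (μ : Measure Ωp) [IsProbabilityMeasure μ]
    (n : ℕ) (X : Fin n → Ωp → Ω) (hXmeas : ∀ i, Measurable (X i))
    (hindep : ProbabilityTheory.iIndepFun (m := fun _ : Fin n => ‹MeasurableSpace Ω›) X μ)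
    (f : (Fin n → Ω) → ℝ) (hf : Measurable f)
    (L : Fin n → ℝ)
    (hbd : ∀ (k : Fin n) (x : Fin n → Ω) (x' : Ω),
      |f x - f (Function.update x k x')| ≤ L k)
    (t : ℝ) (ht : 0 ≤ t) :
    μ {ω | t ≤ f (fun i => X i ω) - ∫ ω', f (fun i => X i ω') ∂μ} ≤
      ENNReal.ofReal (Real.exp (-2 * t ^ 2 / ∑ i, (L i) ^ 2)) := by
  have hXv : Measurable fun ω i ↦ X i ω := measurable_pi_lambda _ hXmeas
  have hlaw : μ.map (fun ω i ↦ X i ω) = Measure.pi fun i ↦ μ.map (X i) :=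
    (iIndepFun_iff_map_fun_eq_pi_map fun i ↦ (hXmeas i).aemeasurable).1 hindep
  have (i : Fin n) : IsProbabilityMeasure (μ.map (X i)) :=
    Measure.isProbabilityMeasure_map (hXmeas i).aemeasurable
  have hsg := HasBoundedDifferences.hasSubgaussianMGF_sub_integral_pi (fun i ↦ μ.map (X i)) hf hbd
  rw [← hlaw, integral_map hXv.aemeasurable hf.aestronglyMeasurable,
    hasSubgaussianMGF_map_iff (hf.sub_const _) hXv] at hsg
  rw [← ofReal_measureReal]
  refine ENNReal.ofReal_le_ofReal ((hsg.measure_ge_le ht).trans_eq ?_)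
  -- `∑ (|Lᵢ| / 2)² = ∑ Lᵢ² / 4`; if the sum vanishes, both exponents are `0` by `x / 0 = 0`.
  congr 1
  push_cast
  simp only [Real.norm_eq_abs, div_pow, sq_abs, ← Finset.sum_div]
  ring
end
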